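/- In the deterministic setting where each x_i ∈ {−1,0,1}ⁿ and ‖U‖ ≤ 2, for step size 0 < γ < 1/(64n³) and any h ∈ Sⁿ⁻¹ with update h' = 𝓐(h) = (h − γ∇̂_L(h))/‖h − γ∇̂_L(h)‖, the differential D𝓐(h) = P_{h'⊥}P_{h⊥}[I − γĤ_L(h)]P_{h⊥}, viewed as a linear map from the tangent space {z : z ⊥ h} to the tangent space {z : z ⊥ h'}, has nonzero determinant (with respect to orthonormal bases of these tangent spaces); equivalently, it is a linear bijection between the two tangent spaces. -/

import Mathlib

open Matrix MeasureTheory ProbabilityTheory Finset Filter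

noncomputable section

/-- The Euclidean (`ℓ²`) norm of a vector in `Fin n → ℝ`. -/
def enorm2 {n : ℕ} (v : Fin n → ℝ) : ℝ := Real.sqrt (∑ j, v j ^ 2)

/-- The spectral norm (ℓ² operator norm) of a square real matrix. -/
def spec {n : ℕ} (A : Matrix (Fin n) (Fin n) ℝ) : ℝ := ‖Matrix.toEuclideanCLM (𝕜 := ℝ) A‖

/-- The Euclidean gradient of `F : ℝⁿ → ℝ`, given by the partial derivatives. -/
def egrad {n : ℕ} (F : (Fin n → ℝ) → ℝ) (h : Fin n → ℝ) : Fin n → ℝ :=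
  fun j => fderiv ℝ F h (Pi.single j 1)

/-- The Euclidean Hessian of `F : ℝⁿ → ℝ`, given by the second partial derivatives. -/
def ehess {n : ℕ} (F : (Fin n → ℝ) → ℝ) (h : Fin n → ℝ) : Matrix (Fin n) (Fin n) ℝ :=
  Matrix.of fun j k => fderiv ℝ (fun v => fderiv ℝ F v (Pi.single j 1)) h (Pi.single k 1)

/-- Projection `P_{h⊥} = I - h hᵀ` onto the tangent space of the unit sphere at `h`. -/
def Pperp {n : ℕ} (h : Fin n → ℝ) : Matrix (Fin n) (Fin n) ℝ := 1 - Matrix.vecMulVec h h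

/-- Riemannian gradient `∇̂F(h) = P_{h⊥} ∇F(h)`. -/
def rgrad {n : ℕ} (F : (Fin n → ℝ) → ℝ) (h : Fin n → ℝ) : Fin n → ℝ :=
  (Pperp h).mulVec (egrad F h)

/-- Riemannian Hessian `ĤF(h) = P_{h⊥} H_F(h) P_{h⊥} - ⟨∇F(h), h⟩ P_{h⊥}`. -/
def rhess {n : ℕ} (F : (Fin n → ℝ) → ℝ) (h : Fin n → ℝ) : Matrix (Fin n) (Fin n) ℝ :=
  Pperp h * ehess F h * Pperp h - (egrad F h ⬝ᵥ h) • Pperp h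

/-- The unit sphere `S^{n-1} ⊆ ℝⁿ`. -/
def usph (n : ℕ) : Set (Fin n → ℝ) := {h | enorm2 h = 1}

/-- The objective `L(h) = -(1/(4N)) ∑_i ‖C_{x_i} U h‖₄⁴`. -/
def Lobj {n N : ℕ} (x : Fin N → Fin n → ℝ) (U : Matrix (Fin n) (Fin n) ℝ)
    (h : Fin n → ℝ) : ℝ :=
  -(1 / (4 * (N : ℝ))) * ∑ i, ∑ j, ((Matrix.circulant (x i) * U).mulVec h j) ^ 4

/-- Manifold gradient descent iterates. -/
def mgdIter {n : ℕ} (F : (Fin n → ℝ) → ℝ) (γ : ℝ) (h0 : Fin n → ℝ) : ℕ → Fin n → ℝ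
  | 0 => h0
  | t + 1 =>
    let w := mgdIter F γ h0 t - γ • rgrad F (mgdIter F γ h0 t)
    (enorm2 w)⁻¹ • w

/-- `h₀` is a stationary point with `r` nonzero entries: each nonzero entry equals `±1/√r`. -/
def IsStatPoint {n : ℕ} (h₀ : Fin n → ℝ) (r : ℕ) : Prop :=
  (∀ j, h₀ j = 0 ∨ h₀ j = 1 / Real.sqrt r ∨ h₀ j = -(1 / Real.sqrt r)) ∧
  (Finset.univ.filter fun j => h₀ j ≠ 0).card = r

/-- `h` is in the `(ρ,r)`-neighborhood of `h₀`. -/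
def nbhd {n : ℕ} (ρ : ℝ) (r : ℕ) (h₀ h : Fin n → ℝ) : Prop :=
  ∀ j, |h j ^ 2 - h₀ j ^ 2| ≤ ρ / r

def H1'' (n : ℕ) (ρ : ℝ) : Set (Fin n → ℝ) :=
  {h | enorm2 h = 1 ∧ ∃ h₀, IsStatPoint h₀ 1 ∧ nbhd ρ 1 h₀ h}

def H2'' (n : ℕ) (ρ : ℝ) : Set (Fin n → ℝ) :=
  {h | enorm2 h = 1 ∧ ∃ r h₀, 1 < r ∧ IsStatPoint h₀ r ∧ nbhd ρ r h₀ h}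

def H3'' (n : ℕ) (ρ : ℝ) : Set (Fin n → ℝ) := usph n \ (H1'' n ρ ∪ H2'' n ρ)

/-- Symmetric positive semidefinite square root (junk value `0` off the PSD cone). -/
def matSqrt {n : ℕ} (Q : Matrix (Fin n) (Fin n) ℝ) : Matrix (Fin n) (Fin n) ℝ :=
  letI := Classical.dec Q.PosSemidef
  if hQ : Q.PosSemidef then
    (hQ.1.eigenvectorUnitary : Matrix (Fin n) (Fin n) ℝ) *
      Matrix.diagonal ((↑) ∘ (fun x : ℝ => Real.sqrt x) ∘ hQ.1.eigenvalues) *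
      (star hQ.1.eigenvectorUnitary : Matrix (Fin n) (Fin n) ℝ)
  else 0

/-- Inverse of the symmetric positive definite square root. -/
def matInvSqrt {n : ℕ} (Q : Matrix (Fin n) (Fin n) ℝ) : Matrix (Fin n) (Fin n) ℝ :=
  (matSqrt Q)⁻¹

/-- The rotation `(C_fᵀ C_f)^{1/2} C_f⁻¹`. -/
def rotMat {n : ℕ} (f : Fin n → ℝ) : Matrix (Fin n) (Fin n) ℝ :=
  matSqrt ((Matrix.circulant f)ᵀ * Matrix.circulant f) * (Matrix.circulant f)⁻¹

def H1set {n : ℕ} (f : Fin n → ℝ) (ρ : ℝ) : Set (Fin n → ℝ) :=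
  (fun h => (rotMat f).mulVec h) '' H1'' n ρ

def H2set {n : ℕ} (f : Fin n → ℝ) (ρ : ℝ) : Set (Fin n → ℝ) :=
  (fun h => (rotMat f).mulVec h) '' H2'' n ρ

def H3set {n : ℕ} (f : Fin n → ℝ) (ρ : ℝ) : Set (Fin n → ℝ) :=
  (fun h => (rotMat f).mulVec h) '' H3'' n ρ

/-- The `n`-point DFT of a real vector. -/
def dftv {n : ℕ} (f : Fin n → ℝ) : Fin n → ℂ :=
  fun j => ∑ k, (f k : ℂ) *
    Complex.exp (-2 * Real.pi * Complex.I * (j : ℕ) * (k : ℕ) / n)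

/-- The inverse `n`-point DFT. -/
def idftv {n : ℕ} (v : Fin n → ℂ) : Fin n → ℂ :=
  fun k => (n : ℂ)⁻¹ * ∑ j, v j *
    Complex.exp (2 * Real.pi * Complex.I * (j : ℕ) * (k : ℕ) / n)

/-- The condition number `κ = max_j |𝓕f_j| / min_k |𝓕f_k|`. -/
def condNum {n : ℕ} (f : Fin n → ℝ) : ℝ :=
  (⨆ j, ‖dftv f j‖) / (⨅ j, ‖dftv f j‖)

/-- The Bernoulli–Rademacher distribution on ℝ with parameter θ. -/
def bernRad (θ : ℝ) : Measure ℝ :=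
  ENNReal.ofReal (θ / 2) • Measure.dirac 1 + ENNReal.ofReal (θ / 2) • Measure.dirac (-1) +
    ENNReal.ofReal (1 - θ) • Measure.dirac 0

/-- The matrix `(1/(θnN)) ∑ᵢ C_{yᵢ}ᵀ C_{yᵢ}`. -/
def Qmat {n N : ℕ} (θ : ℝ) (y : Fin N → Fin n → ℝ) : Matrix (Fin n) (Fin n) ℝ :=
  (1 / (θ * n * N)) • ∑ i, (Matrix.circulant (y i))ᵀ * Matrix.circulant (y i)

/-- The preconditioner `R = ((1/(θnN)) ∑ᵢ C_{yᵢ}ᵀ C_{yᵢ})^{-1/2}`. -/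
def Rmat {n N : ℕ} (θ : ℝ) (y : Fin N → Fin n → ℝ) : Matrix (Fin n) (Fin n) ℝ :=
  matInvSqrt (Qmat θ y)


namespace Stmt10Aux

open Matrix Finset

variable {n N : ℕ}

/-- coordinate of `mulVec` as a continuous linear map -/
def psi (A : Matrix (Fin n) (Fin n) ℝ) (l : Fin n) : (Fin n → ℝ) →L[ℝ] ℝ :=
  LinearMap.toContinuousLinearMap ((LinearMap.proj l).comp A.mulVecLin)

@[simp] lemma psi_apply (A : Matrix (Fin n) (Fin n) ℝ) (l : Fin n) (v : Fin n → ℝ) :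
    psi A l v = A.mulVec v l := rfl

lemma hasFDerivAt_pow' {f : (Fin n → ℝ) → ℝ} {f' : (Fin n → ℝ) →L[ℝ] ℝ} {x : Fin n → ℝ}
    (hf : HasFDerivAt f f' x) (m : ℕ) :
    HasFDerivAt (fun y => f y ^ m) (((m : ℝ) * f x ^ (m - 1)) • f') x := by
  have := (hasDerivAt_pow m (f x)).comp_hasFDerivAt x hf
  exact this

lemma hasFDerivAt_G (c : ℝ) (A : Fin N → Matrix (Fin n) (Fin n) ℝ) (v : Fin n → ℝ) :
    HasFDerivAt (fun h : Fin n → ℝ => c * ∑ i, ∑ l, (A i).mulVec h l ^ 4)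
      (c • ∑ i : Fin N, ∑ l : Fin n,
        ((4 : ℝ) * (A i).mulVec v l ^ 3) • psi (A i) l) v := by
  refine HasFDerivAt.const_mul ?_ c
  refine HasFDerivAt.fun_sum fun i _ => ?_
  refine HasFDerivAt.fun_sum fun l _ => ?_
  have := hasFDerivAt_pow' ((psi (A i) l).hasFDerivAt (x := v)) 4
  norm_num at this
  exact this

lemma egrad_G (c : ℝ) (A : Fin N → Matrix (Fin n) (Fin n) ℝ) (v : Fin n → ℝ) :
    egrad (fun h : Fin n → ℝ => c * ∑ i, ∑ l, (A i).mulVec h l ^ 4) v =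
      ∑ i : Fin N, (A i)ᵀ.mulVec (fun l => c * 4 * (A i).mulVec v l ^ 3) := by
  funext j
  unfold egrad
  rw [(hasFDerivAt_G c A v).fderiv]
  simp only [ContinuousLinearMap.coe_smul', Pi.smul_apply, ContinuousLinearMap.coe_sum',
    Finset.sum_apply, smul_eq_mul, psi_apply,
    Matrix.mulVec_single, MulOpposite.op_one, one_smul, Matrix.col_apply, mul_one,
    Finset.mul_sum]
  refine Finset.sum_congr rfl fun i _ => ?_
  simp only [Matrix.mulVec, dotProduct, transpose_apply]
  refine Finset.sum_congr rfl fun l _ => by ring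

end Stmt10Aux
namespace Stmt10Aux
open Matrix Finset
variable {n N : ℕ}

lemma ehess_G (c : ℝ) (A : Fin N → Matrix (Fin n) (Fin n) ℝ) (h : Fin n → ℝ) :
    ehess (fun h : Fin n → ℝ => c * ∑ i, ∑ l, (A i).mulVec h l ^ 4) h =
      ∑ i : Fin N, (A i)ᵀ * Matrix.diagonal (fun l => c * 12 * (A i).mulVec h l ^ 2) * A i := by
  ext j k
  unfold ehess
  rw [Matrix.of_apply]
  have hfun : (fun v => fderiv ℝ (fun h : Fin n → ℝ => c * ∑ i, ∑ l, (A i).mulVec h l ^ 4) v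
        (Pi.single j 1))
      = fun v => ∑ i, ∑ l, (c * 4 * A i l j) * (psi (A i) l v) ^ 3 := by
    funext v
    rw [(hasFDerivAt_G c A v).fderiv]
    simp only [ContinuousLinearMap.coe_smul', Pi.smul_apply, ContinuousLinearMap.coe_sum',
      Finset.sum_apply, smul_eq_mul, psi_apply, Matrix.mulVec_single, MulOpposite.op_one, one_smul, Matrix.col_apply, mul_one,
      Finset.mul_sum]
    refine Finset.sum_congr rfl fun i _ => Finset.sum_congr rfl fun l _ => by ring
  rw [hfun]
  have hd : HasFDerivAt (fun v => ∑ i, ∑ l, (c * 4 * A i l j) * (psi (A i) l v) ^ 3)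
      (∑ i : Fin N, ∑ l : Fin n,
        (c * 4 * A i l j) • (((3 : ℝ) * (psi (A i) l h) ^ 2) • psi (A i) l)) h := by
    refine HasFDerivAt.fun_sum fun i _ => HasFDerivAt.fun_sum fun l _ => ?_
    have := (hasFDerivAt_pow' ((psi (A i) l).hasFDerivAt (x := h)) 3).const_mul (c * 4 * A i l j)
    norm_num at this ⊢
    exact this
  rw [hd.fderiv]
  simp only [ContinuousLinearMap.coe_sum', Finset.sum_apply, ContinuousLinearMap.coe_smul',
    Pi.smul_apply, smul_eq_mul, psi_apply, Matrix.mulVec_single, MulOpposite.op_one, one_smul, Matrix.col_apply, mul_one,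
    Finset.sum_apply]
  rw [Matrix.sum_apply]
  refine Finset.sum_congr rfl fun i _ => ?_
  rw [Matrix.mul_apply]
  refine Finset.sum_congr rfl fun l _ => ?_
  rw [Matrix.mul_diagonal, transpose_apply]
  ring

end Stmt10Aux
namespace Stmt10Aux
open Matrix Finset
variable {n N : ℕ}

lemma Pperp_mulVec (h v : Fin n → ℝ) : (Pperp h).mulVec v = v - (h ⬝ᵥ v) • h := by
  funext j
  simp only [Pperp, Matrix.sub_mulVec, Matrix.one_mulVec, Pi.sub_apply, Pi.smul_apply,
    smul_eq_mul]
  congr 1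
  simp only [Matrix.mulVec, dotProduct, Matrix.vecMulVec_apply, Finset.mul_sum]
  rw [Finset.sum_mul]
  exact Finset.sum_congr rfl fun k _ => by ring

lemma Pperp_transpose (h : Fin n → ℝ) : (Pperp h)ᵀ = Pperp h := by
  simp [Pperp, Matrix.transpose_sub, Matrix.vecMulVec_apply]

lemma dot_Pperp (h v : Fin n → ℝ) (hh : h ⬝ᵥ h = 1) : h ⬝ᵥ ((Pperp h).mulVec v) = 0 := by
  rw [Pperp_mulVec, dotProduct_sub, dotProduct_smul, hh, smul_eq_mul, mul_one, sub_self]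

lemma quad_AtDA (A : Matrix (Fin n) (Fin n) ℝ) (d : Fin n → ℝ) (u : Fin n → ℝ) :
    u ⬝ᵥ ((Aᵀ * Matrix.diagonal d * A).mulVec u) = ∑ l, d l * ((A.mulVec u) l) ^ 2 := by
  rw [← Matrix.mulVec_mulVec, ← Matrix.mulVec_mulVec, Matrix.dotProduct_mulVec,
    Matrix.vecMul_transpose]
  simp only [dotProduct, Matrix.mulVec_diagonal]
  exact Finset.sum_congr rfl fun l _ => by ring

lemma dotProduct_self_eq (u : Fin n → ℝ) : u ⬝ᵥ u = ∑ j, u j ^ 2 := by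
  simp [dotProduct, pow_two]

lemma dotProduct_self_pos (u : Fin n → ℝ) (hu : u ≠ 0) : 0 < u ⬝ᵥ u := by
  rw [dotProduct_self_eq]
  obtain ⟨j, hj⟩ : ∃ j, u j ≠ 0 := by
    by_contra hc; push_neg at hc; exact hu (funext hc)
  exact Finset.sum_pos' (fun k _ => sq_nonneg _) ⟨j, Finset.mem_univ j, by positivity⟩

end Stmt10Aux
namespace Stmt10Aux
open Matrix Finset
variable {n N : ℕ}

lemma sum_mulVec' {ι : Type*} (s : Finset ι) (M : ι → Matrix (Fin n) (Fin n) ℝ)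
    (v : Fin n → ℝ) : (∑ i ∈ s, M i).mulVec v = ∑ i ∈ s, (M i).mulVec v := by
  funext j
  simp only [Matrix.mulVec, dotProduct, Matrix.sum_apply, Finset.sum_apply,
    Finset.sum_mul]
  exact Finset.sum_comm

lemma dotProduct_sum' {ι : Type*} (s : Finset ι) (u : Fin n → ℝ) (w : ι → Fin n → ℝ) :
    u ⬝ᵥ (∑ i ∈ s, w i) = ∑ i ∈ s, u ⬝ᵥ w i := by
  simp only [dotProduct, Finset.sum_apply, Finset.mul_sum]
  exact Finset.sum_comm

lemma sum_dotProduct' {ι : Type*} (s : Finset ι) (u : Fin n → ℝ) (w : ι → Fin n → ℝ) :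
    (∑ i ∈ s, w i) ⬝ᵥ u = ∑ i ∈ s, w i ⬝ᵥ u := by
  simp only [dotProduct, Finset.sum_apply, Finset.sum_mul]
  exact Finset.sum_comm

lemma spec_mulVec_sq (U : Matrix (Fin n) (Fin n) ℝ) (v : Fin n → ℝ) :
    ∑ l, (U.mulVec v l) ^ 2 ≤ spec U ^ 2 * ∑ l, v l ^ 2 := by
  have h0 : ∀ w : Fin n → ℝ, ‖(WithLp.equiv 2 (Fin n → ℝ)).symm w‖ =
      Real.sqrt (∑ l, w l ^ 2) := by
    intro w
    rw [EuclideanSpace.norm_eq]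
    congr 1
    exact Finset.sum_congr rfl fun l _ => by
      show ‖w l‖ ^ 2 = w l ^ 2; rw [Real.norm_eq_abs, sq_abs]
  have h1 := (Matrix.toEuclideanCLM (𝕜 := ℝ) (n := Fin n) U).le_opNorm
    ((WithLp.equiv 2 (Fin n → ℝ)).symm v)
  rw [WithLp.equiv_symm_apply, Matrix.toEuclideanCLM_toLp, ← Matrix.toLin'_apply,
    ← WithLp.equiv_symm_apply] at h1
  have h2 : Matrix.toLin' U v = U.mulVec v := Matrix.toLin'_apply U v
  rw [h2, h0, h0] at h1
  have hs1 : (0:ℝ) ≤ ∑ l, (U.mulVec v l) ^ 2 := by positivity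
  have hs2 : (0:ℝ) ≤ ∑ l, v l ^ 2 := by positivity
  calc ∑ l, (U.mulVec v l) ^ 2 = Real.sqrt (∑ l, (U.mulVec v l) ^ 2) ^ 2 :=
        (Real.sq_sqrt hs1).symm
    _ ≤ (spec U * Real.sqrt (∑ l, v l ^ 2)) ^ 2 := by
        apply pow_le_pow_left₀ (Real.sqrt_nonneg _) h1
    _ = spec U ^ 2 * ∑ l, v l ^ 2 := by rw [mul_pow, Real.sq_sqrt hs2]

lemma row_sq_bound (C : Matrix (Fin n) (Fin n) ℝ) (hC : ∀ l m, C l m ^ 2 ≤ 1)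
    (v : Fin n → ℝ) (l : Fin n) :
    (C.mulVec v l) ^ 2 ≤ n * ∑ m, v m ^ 2 := by
  have h1 : (C.mulVec v l) ^ 2 ≤ (∑ m, C l m ^ 2) * ∑ m, v m ^ 2 := by
    simpa [Matrix.mulVec, dotProduct] using
      Finset.sum_mul_sq_le_sq_mul_sq Finset.univ (fun m => C l m) v
  refine h1.trans (mul_le_mul_of_nonneg_right ?_ (by positivity))
  calc ∑ m, C l m ^ 2 ≤ ∑ _m : Fin n, (1:ℝ) := Finset.sum_le_sum fun m _ => hC l m
    _ = n := by simp

end Stmt10Aux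
namespace Stmt10Aux
open Matrix Finset
variable {n N : ℕ}

lemma circ_entry_sq (x : Fin n → ℝ) (hx : ∀ j, x j = -1 ∨ x j = 0 ∨ x j = 1) (l m : Fin n) :
    (Matrix.circulant x) l m ^ 2 ≤ 1 := by
  rw [Matrix.circulant_apply]
  rcases hx (l - m) with h | h | h <;> rw [h] <;> norm_num

lemma Arow_sq (x : Fin n → ℝ) (hx : ∀ j, x j = -1 ∨ x j = 0 ∨ x j = 1)
    (U : Matrix (Fin n) (Fin n) ℝ) (hU : spec U ≤ 2) (v : Fin n → ℝ) (l : Fin n) :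
    ((Matrix.circulant x * U).mulVec v l) ^ 2 ≤ 4 * n * ∑ m, v m ^ 2 := by
  rw [← Matrix.mulVec_mulVec]
  have h1 := row_sq_bound (Matrix.circulant x) (circ_entry_sq x hx) (U.mulVec v) l
  have h2 := spec_mulVec_sq U v
  have h3 : spec U ^ 2 ≤ 4 := by
    have h0 : (0:ℝ) ≤ spec U := norm_nonneg _
    nlinarith
  have h4 : ∑ m, (U.mulVec v m) ^ 2 ≤ 4 * ∑ m, v m ^ 2 := by
    refine h2.trans ?_
    have : (0:ℝ) ≤ ∑ m, v m ^ 2 := by positivity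
    nlinarith
  calc ((Matrix.circulant x).mulVec (U.mulVec v) l) ^ 2
      ≤ n * ∑ m, (U.mulVec v m) ^ 2 := h1
    _ ≤ n * (4 * ∑ m, v m ^ 2) := by
        refine mul_le_mul_of_nonneg_left h4 (by positivity)
    _ = 4 * n * ∑ m, v m ^ 2 := by ring

lemma Asum_sq (x : Fin n → ℝ) (hx : ∀ j, x j = -1 ∨ x j = 0 ∨ x j = 1)
    (U : Matrix (Fin n) (Fin n) ℝ) (hU : spec U ≤ 2) (v : Fin n → ℝ) :
    ∑ l, ((Matrix.circulant x * U).mulVec v l) ^ 2 ≤ 4 * n ^ 2 * ∑ m, v m ^ 2 := by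
  calc ∑ l, ((Matrix.circulant x * U).mulVec v l) ^ 2
      ≤ ∑ _l : Fin n, 4 * (n:ℝ) * ∑ m, v m ^ 2 :=
        Finset.sum_le_sum fun l _ => Arow_sq x hx U hU v l
    _ = 4 * n ^ 2 * ∑ m, v m ^ 2 := by
        rw [Finset.sum_const, Finset.card_univ, Fintype.card_fin, nsmul_eq_mul]; ring

end Stmt10Aux
namespace Stmt10Aux
open Matrix Finset
variable {n N : ℕ}

lemma grad_dot_bound (hN : 0 < N) (x : Fin N → Fin n → ℝ)
    (hx : ∀ i j, x i j = -1 ∨ x i j = 0 ∨ x i j = 1)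
    (U : Matrix (Fin n) (Fin n) ℝ) (hU : spec U ≤ 2) (h : Fin n → ℝ)
    (hS : ∑ j, h j ^ 2 = 1) :
    -(egrad (Lobj x U) h ⬝ᵥ h) ≤ 16 * (n : ℝ) ^ 3 := by
  set c : ℝ := -(1 / (4 * (N : ℝ))) with hc
  set A : Fin N → Matrix (Fin n) (Fin n) ℝ := fun i => Matrix.circulant (x i) * U with hA
  have hL : Lobj x U = fun h : Fin n → ℝ => c * ∑ i, ∑ l, (A i).mulVec h l ^ 4 := rfl
  have hN' : (N : ℝ) ≠ 0 := Nat.cast_ne_zero.mpr hN.ne'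
  rw [hL, egrad_G, sum_dotProduct']
  have hterm : ∀ i : Fin N,
      ((A i)ᵀ.mulVec (fun l => c * 4 * (A i).mulVec h l ^ 3)) ⬝ᵥ h =
        c * 4 * ∑ l, ((A i).mulVec h l) ^ 4 := by
    intro i
    rw [dotProduct_comm, Matrix.dotProduct_mulVec, Matrix.vecMul_transpose]
    simp only [dotProduct, Finset.mul_sum]
    exact Finset.sum_congr rfl fun l _ => by ring
  rw [Finset.sum_congr rfl fun i _ => hterm i]
  have key : ∀ i : Fin N, ∑ l, ((A i).mulVec h l) ^ 4 ≤ 16 * (n : ℝ) ^ 3 := by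
    intro i
    have hrow : ∀ l, ((A i).mulVec h l) ^ 2 ≤ 4 * (n : ℝ) := by
      intro l
      have := Arow_sq (x i) (hx i) U hU h l
      rwa [hS, mul_one] at this
    have hsum : ∑ l, ((A i).mulVec h l) ^ 2 ≤ 4 * (n : ℝ) ^ 2 := by
      have := Asum_sq (x i) (hx i) U hU h
      rwa [hS, mul_one] at this
    calc ∑ l, ((A i).mulVec h l) ^ 4
        ≤ ∑ l, 4 * (n : ℝ) * ((A i).mulVec h l) ^ 2 := by
          refine Finset.sum_le_sum fun l _ => ?_
          have h2 : ((A i).mulVec h l) ^ 4 =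
              ((A i).mulVec h l) ^ 2 * ((A i).mulVec h l) ^ 2 := by ring
          rw [h2]
          exact mul_le_mul_of_nonneg_right (hrow l) (sq_nonneg _)
      _ = 4 * (n : ℝ) * ∑ l, ((A i).mulVec h l) ^ 2 := by rw [Finset.mul_sum]
      _ ≤ 4 * (n : ℝ) * (4 * (n : ℝ) ^ 2) :=
          mul_le_mul_of_nonneg_left hsum (by positivity)
      _ = 16 * (n : ℝ) ^ 3 := by ring
  have hc4 : c * 4 = -(1 / (N : ℝ)) := by rw [hc]; field_simp
  calc -(∑ i : Fin N, c * 4 * ∑ l, ((A i).mulVec h l) ^ 4)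
      = ∑ i : Fin N, (1 / (N : ℝ)) * ∑ l, ((A i).mulVec h l) ^ 4 := by
        rw [← Finset.sum_neg_distrib]
        exact Finset.sum_congr rfl fun i _ => by rw [hc4]; ring
    _ ≤ ∑ _i : Fin N, (1 / (N : ℝ)) * (16 * (n : ℝ) ^ 3) := by
        refine Finset.sum_le_sum fun i _ => ?_
        exact mul_le_mul_of_nonneg_left (key i) (by positivity)
    _ = 16 * (n : ℝ) ^ 3 := by
        rw [Finset.sum_const, Finset.card_univ, Fintype.card_fin, nsmul_eq_mul]
        field_simp

lemma hess_quad_nonpos (x : Fin N → Fin n → ℝ)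
    (U : Matrix (Fin n) (Fin n) ℝ) (h u : Fin n → ℝ) :
    u ⬝ᵥ ((ehess (Lobj x U) h).mulVec u) ≤ 0 := by
  set c : ℝ := -(1 / (4 * (N : ℝ))) with hc
  set A : Fin N → Matrix (Fin n) (Fin n) ℝ := fun i => Matrix.circulant (x i) * U with hA
  have hL : Lobj x U = fun h : Fin n → ℝ => c * ∑ i, ∑ l, (A i).mulVec h l ^ 4 := rfl
  rw [hL, ehess_G, sum_mulVec', dotProduct_sum']
  refine Finset.sum_nonpos fun i _ => ?_
  rw [quad_AtDA]
  refine Finset.sum_nonpos fun l _ => ?_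
  have hcneg : c ≤ 0 := by rw [hc]; exact neg_nonpos.mpr (by positivity)
  have h1 : c * 12 * ((A i).mulVec h l) ^ 2 ≤ 0 := by nlinarith [sq_nonneg ((A i).mulVec h l)]
  exact mul_nonpos_of_nonpos_of_nonneg h1 (sq_nonneg _)

end Stmt10Aux
namespace Stmt10Aux
open Matrix Finset
variable {n N : ℕ}

lemma key_pos (hn : 0 < n) (hN : 0 < N) (x : Fin N → Fin n → ℝ)
    (hx : ∀ i j, x i j = -1 ∨ x i j = 0 ∨ x i j = 1)
    (U : Matrix (Fin n) (Fin n) ℝ) (hU : spec U ≤ 2)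
    (γ : ℝ) (hγ0 : 0 < γ) (hγ : γ < 1 / (64 * (n : ℝ) ^ 3))
    (h : Fin n → ℝ) (hS : ∑ j, h j ^ 2 = 1)
    (u : Fin n → ℝ) (hu : u ⬝ᵥ h = 0) (hune : u ≠ 0) :
    0 < u ⬝ᵥ ((1 - γ • rhess (Lobj x U) h).mulVec u) := by
  have hhu : h ⬝ᵥ u = 0 := by rw [dotProduct_comm]; exact hu
  have hPu : (Pperp h).mulVec u = u := by rw [Pperp_mulVec, hhu]; simp
  have hdotP : ∀ w : Fin n → ℝ, u ⬝ᵥ ((Pperp h).mulVec w) = u ⬝ᵥ w := by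
    intro w
    rw [Pperp_mulVec, dotProduct_sub, dotProduct_smul, smul_eq_mul, hu]
    ring
  have hSu : 0 < u ⬝ᵥ u := dotProduct_self_pos u hune
  have hrh : u ⬝ᵥ ((rhess (Lobj x U) h).mulVec u) ≤ 16 * (n : ℝ) ^ 3 * (u ⬝ᵥ u) := by
    unfold rhess
    rw [Matrix.sub_mulVec, dotProduct_sub]
    have e1 : (Pperp h * ehess (Lobj x U) h * Pperp h).mulVec u
        = (Pperp h).mulVec ((ehess (Lobj x U) h).mulVec u) := by
      rw [← Matrix.mulVec_mulVec, ← Matrix.mulVec_mulVec, hPu]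
    rw [e1, hdotP]
    rw [Matrix.smul_mulVec, hPu, dotProduct_smul, smul_eq_mul]
    have b1 := hess_quad_nonpos x U h u
    have b2 := grad_dot_bound hN x hx U hU h hS
    nlinarith
  rw [Matrix.sub_mulVec, dotProduct_sub, Matrix.one_mulVec, Matrix.smul_mulVec,
    dotProduct_smul, smul_eq_mul]
  have hn3 : (0:ℝ) < 64 * (n : ℝ) ^ 3 := by
    have : (0:ℝ) < (n : ℝ) := Nat.cast_pos.mpr hn
    positivity
  have hγ64 : γ * (64 * (n : ℝ) ^ 3) < 1 := by
    rw [lt_div_iff₀ hn3] at hγ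
    linarith
  have h16 : γ * (16 * (n : ℝ) ^ 3) < 1 := by nlinarith [hγ0.le, hn3]
  have hq : γ * (u ⬝ᵥ ((rhess (Lobj x U) h).mulVec u)) ≤ γ * (16 * (n : ℝ) ^ 3 * (u ⬝ᵥ u)) :=
    mul_le_mul_of_nonneg_left hrh hγ0.le
  nlinarith

end Stmt10Aux
/-- Lemma in the proof of Theorem 2: the differential of the manifold gradient descent map is
a linear bijection between the tangent spaces at `h` and at `h' = 𝓐(h)`. -/
theorem stmt10 {n N : ℕ} (hn : 0 < n) (hN : 0 < N)
    (x : Fin N → Fin n → ℝ) (hx : ∀ i j, x i j = -1 ∨ x i j = 0 ∨ x i j = 1)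
    (U : Matrix (Fin n) (Fin n) ℝ) (hU : spec U ≤ 2)
    (γ : ℝ) (hγ0 : 0 < γ) (hγ : γ < 1 / (64 * (n : ℝ) ^ 3))
    (h : Fin n → ℝ) (hh : h ∈ usph n) :
    let w := h - γ • rgrad (Lobj x U) h
    let h' := (enorm2 w)⁻¹ • w
    let DA := Pperp h' * Pperp h * (1 - γ • rhess (Lobj x U) h) * Pperp h
    Set.BijOn (fun z => DA.mulVec z) {z | z ⬝ᵥ h = 0} {z | z ⬝ᵥ h' = 0} := by
  intro w h' DA
  classical
  open Stmt10Aux in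
  have hw_def : w = h - γ • rgrad (Lobj x U) h := rfl
  have hh'_def : h' = (enorm2 w)⁻¹ • w := rfl
  have hDA_def : DA = Pperp h' * Pperp h * (1 - γ • rhess (Lobj x U) h) * Pperp h := rfl
  clear_value w h' DA
  set E : Matrix (Fin n) (Fin n) ℝ := 1 - γ • rhess (Lobj x U) h with hE_def
  -- basic facts
  have hS : ∑ j, h j ^ 2 = 1 := by
    have h1 : Real.sqrt (∑ j, h j ^ 2) = 1 := hh
    have h2 := Real.sq_sqrt (show (0:ℝ) ≤ ∑ j, h j ^ 2 by positivity)
    rw [h1] at h2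
    simpa using h2.symm
  have hhh : h ⬝ᵥ h = 1 := by rw [Stmt10Aux.dotProduct_self_eq]; exact hS
  have hgrad0 : h ⬝ᵥ rgrad (Lobj x U) h = 0 := Stmt10Aux.dot_Pperp h _ hhh
  have hw1 : h ⬝ᵥ w = 1 := by
    rw [hw_def, dotProduct_sub, dotProduct_smul, hgrad0, hhh]
    simp
  have hwne : w ≠ 0 := by
    intro h0
    rw [h0] at hw1
    simp at hw1
  have hSw : 0 < ∑ j, w j ^ 2 := by
    have := Stmt10Aux.dotProduct_self_pos w hwne
    rwa [Stmt10Aux.dotProduct_self_eq] at this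
  have henw : enorm2 w = Real.sqrt (∑ j, w j ^ 2) := rfl
  have henw_pos : 0 < enorm2 w := by rw [henw]; exact Real.sqrt_pos.mpr hSw
  have hww : w ⬝ᵥ w = ∑ j, w j ^ 2 := Stmt10Aux.dotProduct_self_eq w
  have hh'h' : h' ⬝ᵥ h' = 1 := by
    rw [hh'_def, smul_dotProduct, dotProduct_smul, smul_eq_mul, smul_eq_mul, hww, henw]
    rw [← mul_assoc, ← mul_inv, Real.mul_self_sqrt hSw.le]
    exact inv_mul_cancel₀ hSw.ne'
  have hdh' : h ⬝ᵥ h' = (enorm2 w)⁻¹ := by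
    rw [hh'_def, dotProduct_smul, smul_eq_mul, hw1, mul_one]
  have hdne : h ⬝ᵥ h' ≠ 0 := by rw [hdh']; positivity
  -- tangent projection identities
  have hP_id : ∀ u : Fin n → ℝ, u ⬝ᵥ h = 0 → (Pperp h).mulVec u = u := by
    intro u hu
    rw [Stmt10Aux.Pperp_mulVec, dotProduct_comm h u, hu]
    simp
  have hdotP : ∀ (z v : Fin n → ℝ), z ⬝ᵥ h = 0 →
      z ⬝ᵥ ((Pperp h).mulVec v) = z ⬝ᵥ v := by
    intro z v hz
    rw [Stmt10Aux.Pperp_mulVec, dotProduct_sub, dotProduct_smul, smul_eq_mul, hz]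
    ring
  -- maps into the tangent space at h'
  have hmaps : ∀ z : Fin n → ℝ, (DA.mulVec z) ⬝ᵥ h' = 0 := by
    intro z
    have hDA2 : DA = Pperp h' * (Pperp h * (E * Pperp h)) := by
      rw [hDA_def]
      simp only [Matrix.mul_assoc]
    rw [hDA2, ← Matrix.mulVec_mulVec, dotProduct_comm]
    exact Stmt10Aux.dot_Pperp h' _ hh'h'
  -- injectivity on the tangent space at h
  have hinj : ∀ z : Fin n → ℝ, z ⬝ᵥ h = 0 → DA.mulVec z = 0 → z = 0 := by
    intro z hz hz0
    by_contra hzne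
    have hpos : 0 < z ⬝ᵥ (E.mulVec z) := by
      rw [hE_def]
      exact Stmt10Aux.key_pos hn hN x hx U hU γ hγ0 hγ h hS z hz hzne
    have hPz : (Pperp h).mulVec z = z := hP_id z hz
    have hDAz : DA.mulVec z = (Pperp h').mulVec ((Pperp h).mulVec (E.mulVec z)) := by
      rw [hDA_def, ← Matrix.mulVec_mulVec, hPz, ← Matrix.mulVec_mulVec,
        ← Matrix.mulVec_mulVec]
    set v : Fin n → ℝ := E.mulVec z with hv_def
    set Pv : Fin n → ℝ := (Pperp h).mulVec v with hPv_def
    have h5 : Pv - (h' ⬝ᵥ Pv) • h' = 0 := by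
      have := hz0
      rw [hDAz, Stmt10Aux.Pperp_mulVec] at this
      exact this
    have hPv_eq : Pv = (h' ⬝ᵥ Pv) • h' := by
      have := sub_eq_zero.mp h5
      exact this
    have h6 : h ⬝ᵥ Pv = 0 := Stmt10Aux.dot_Pperp h v hhh
    have h7 : (h' ⬝ᵥ Pv) * (h ⬝ᵥ h') = 0 := by
      calc (h' ⬝ᵥ Pv) * (h ⬝ᵥ h') = h ⬝ᵥ ((h' ⬝ᵥ Pv) • h') := by
            rw [dotProduct_smul, smul_eq_mul]
        _ = h ⬝ᵥ Pv := by rw [← hPv_eq]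
        _ = 0 := h6
    have h8 : h' ⬝ᵥ Pv = 0 := by
      rcases mul_eq_zero.mp h7 with h8 | h8
      · exact h8
      · exact absurd h8 hdne
    have h9 : Pv = 0 := by rw [hPv_eq, h8, zero_smul]
    have h10 : z ⬝ᵥ Pv = z ⬝ᵥ v := hdotP z v hz
    rw [h9, dotProduct_zero] at h10
    rw [← h10] at hpos
    exact lt_irrefl 0 hpos
  -- linear algebra: bijectivity between the two hyperplanes
  let φ1 : (Fin n → ℝ) →ₗ[ℝ] ℝ :=
    { toFun := fun z => z ⬝ᵥ h
      map_add' := fun a b => add_dotProduct a b h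
      map_smul' := fun r a => smul_dotProduct r a h }
  let φ2 : (Fin n → ℝ) →ₗ[ℝ] ℝ :=
    { toFun := fun z => z ⬝ᵥ h'
      map_add' := fun a b => add_dotProduct a b h'
      map_smul' := fun r a => smul_dotProduct r a h' }
  have hrank : ∀ (φ : (Fin n → ℝ) →ₗ[ℝ] ℝ), Function.Surjective φ →
      Module.finrank ℝ (LinearMap.ker φ) = n - 1 := by
    intro φ hsurj
    have h1 := LinearMap.finrank_range_add_finrank_ker φ
    rw [LinearMap.range_eq_top.mpr hsurj, finrank_top, Module.finrank_self,
      Module.finrank_pi] at h1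
    simp at h1
    omega
  have hsurj1 : Function.Surjective φ1 := by
    intro r
    exact ⟨r • h, by simp only [φ1, LinearMap.coe_mk, AddHom.coe_mk, smul_dotProduct,
      smul_eq_mul, hhh, mul_one]⟩
  have hsurj2 : Function.Surjective φ2 := by
    intro r
    exact ⟨r • h', by simp only [φ2, LinearMap.coe_mk, AddHom.coe_mk, smul_dotProduct,
      smul_eq_mul, hh'h', mul_one]⟩
  let T : LinearMap.ker φ1 →ₗ[ℝ] LinearMap.ker φ2 :=
    LinearMap.codRestrict (LinearMap.ker φ2) ((Matrix.mulVecLin DA).comp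
      (LinearMap.ker φ1).subtype) (fun z => by
        simp only [LinearMap.mem_ker, LinearMap.comp_apply, Submodule.subtype_apply,
          Matrix.mulVecLin_apply]
        exact hmaps z.1)
  have hTinj : Function.Injective T := by
    intro z1 z2 heq
    have heq' : DA.mulVec z1.1 = DA.mulVec z2.1 := congrArg Subtype.val heq
    have hsub : DA.mulVec (z1.1 - z2.1) = 0 := by
      rw [Matrix.mulVec_sub, heq', sub_self]
    have htan : (z1.1 - z2.1) ⬝ᵥ h = 0 := by
      rw [sub_dotProduct]
      have e1 : z1.1 ⬝ᵥ h = 0 := LinearMap.mem_ker.mp z1.2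
      have e2 : z2.1 ⬝ᵥ h = 0 := LinearMap.mem_ker.mp z2.2
      rw [e1, e2, sub_self]
    have := hinj _ htan hsub
    exact Subtype.ext (sub_eq_zero.mp this)
  have hTsurj : Function.Surjective T :=
    (LinearMap.injective_iff_surjective_of_finrank_eq_finrank
      (by rw [hrank φ1 hsurj1, hrank φ2 hsurj2])).mp hTinj
  refine ⟨?_, ?_, ?_⟩
  · intro z hz
    exact hmaps z
  · intro z1 h1 z2 h2 heq
    have hsub : DA.mulVec (z1 - z2) = 0 := by
      rw [Matrix.mulVec_sub]
      simp only [Set.mem_setOf_eq] at heq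
      rw [show DA.mulVec z1 = DA.mulVec z2 from heq, sub_self]
    have htan : (z1 - z2) ⬝ᵥ h = 0 := by
      rw [sub_dotProduct, h1, h2, sub_self]
    exact sub_eq_zero.mp (hinj _ htan hsub)
  · intro y hy
    have hy' : (⟨y, LinearMap.mem_ker.mpr hy⟩ : LinearMap.ker φ2) ∈ Set.univ := trivial
    obtain ⟨z, hz⟩ := hTsurj ⟨y, LinearMap.mem_ker.mpr hy⟩
    refine ⟨z.1, LinearMap.mem_ker.mp z.2, ?_⟩
    exact congrArg Subtype.val hz
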